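/- Let D be a positive integer, w, x ∈ ℝ^D, and S ⊆ ℝ^D a linear subspace such that the orthogonal projection P_S(w) of w onto S is nonzero. Then the infimum of ‖δ‖₂ over all δ ∈ S satisfying ⟨w, x + δ⟩ = 0 equals |⟨w, x⟩| / ‖P_S(w)‖₂. -/

import Mathlib

/-! On `S` the functional `⟪w, ·⟫` agrees with `⟪P_S w, ·⟫`, so the margin is the least norm of
a `δ ∈ S` with `⟪P_S w, δ⟫ = -⟪w, x⟫`. By Cauchy–Schwarz this is `|⟪w, x⟫| / ‖P_S w‖`, attained
at the multiple of `P_S w` that solves the equation. -/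

open InnerProductSpace

variable {E : Type*} [NormedAddCommGroup E] [InnerProductSpace ℝ E]

theorem isLeast_norm_of_inner_eq {S : Submodule ℝ E} {p : E} (hpS : p ∈ S) (hp : p ≠ 0) (c : ℝ) :
    IsLeast {r : ℝ | ∃ δ ∈ S, ⟪p, δ⟫_ℝ = c ∧ ‖δ‖ = r} (|c| / ‖p‖) := by
  have hp' : 0 < ‖p‖ := norm_pos_iff.2 hp
  refine ⟨⟨(c / ‖p‖ ^ 2) • p, S.smul_mem _ hpS, ?_, ?_⟩, ?_⟩
  · rw [real_inner_smul_right, real_inner_self_eq_norm_sq]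
    field_simp
  · rw [norm_smul, Real.norm_eq_abs, abs_div, abs_of_nonneg (sq_nonneg ‖p‖)]
    field_simp
  · rintro r ⟨δ, -, rfl, rfl⟩
    rw [div_le_iff₀ hp', mul_comm]
    exact abs_real_inner_le_norm p δ

theorem Submodule.inner_orthogonalProjectionOnto_left_of_mem (S : Submodule ℝ E)
    [S.HasOrthogonalProjection] (w : E) {δ : E} (hδ : δ ∈ S) :
    ⟪(S.orthogonalProjectionOnto w : E), δ⟫_ℝ = ⟪w, δ⟫_ℝ :=
  (S.coe_inner _ ⟨δ, hδ⟩).symm.trans (S.inner_orthogonalProjectionOnto_eq_of_mem_right ⟨δ, hδ⟩ w)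

theorem Submodule.isLeast_margin (S : Submodule ℝ E) [S.HasOrthogonalProjection] (w x : E)
    (hw : (S.orthogonalProjectionOnto w : E) ≠ 0) :
    IsLeast {r : ℝ | ∃ δ ∈ S, ⟪w, x + δ⟫_ℝ = 0 ∧ ‖δ‖ = r}
      (|⟪w, x⟫_ℝ| / ‖(S.orthogonalProjectionOnto w : E)‖) := by
  have hset : {r : ℝ | ∃ δ ∈ S, ⟪w, x + δ⟫_ℝ = 0 ∧ ‖δ‖ = r} =
      {r : ℝ | ∃ δ ∈ S, ⟪(S.orthogonalProjectionOnto w : E), δ⟫_ℝ = -⟪w, x⟫_ℝ ∧ ‖δ‖ = r} := by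
    refine Set.ext fun r => exists_congr fun δ => and_congr_right fun hδ => and_congr_left' ?_
    rw [S.inner_orthogonalProjectionOnto_left_of_mem w hδ, inner_add_right, eq_neg_iff_add_eq_zero,
      add_comm]
  rw [hset, ← abs_neg]
  exact isLeast_norm_of_inner_eq (S.orthogonalProjectionOnto w).2 hw _

theorem margin_linear_classifier_general (D : ℕ)
    (w x : EuclideanSpace ℝ (Fin D)) (S : Submodule ℝ (EuclideanSpace ℝ (Fin D)))
    (hw : (S.orthogonalProjectionOnto w : EuclideanSpace ℝ (Fin D)) ≠ 0) :
    sInf {r : ℝ | ∃ δ ∈ S, inner ℝ w (x + δ) = (0 : ℝ) ∧ ‖δ‖ = r} =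
      |inner ℝ w x| / ‖(S.orthogonalProjectionOnto w : EuclideanSpace ℝ (Fin D))‖ :=
  (S.isLeast_margin w x hw).csInf_eq

/-- For a linear classifier `f(x) = ⟪w, x⟫` on `ℝ^D`, the margin of `x`
in a linear subspace `S` (the infimum of `‖δ‖₂` over `δ ∈ S` with `⟪w, x + δ⟫ = 0`)
equals `|⟪w, x⟫| / ‖P_S w‖₂`, provided the orthogonal projection `P_S w` is nonzero. -/
theorem margin_linear_classifier (D : ℕ) (hD : 0 < D)
    (w x : EuclideanSpace ℝ (Fin D)) (S : Submodule ℝ (EuclideanSpace ℝ (Fin D)))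
    (hw : (S.orthogonalProjectionOnto w : EuclideanSpace ℝ (Fin D)) ≠ 0) :
    sInf {r : ℝ | ∃ δ ∈ S, inner ℝ w (x + δ) = (0 : ℝ) ∧ ‖δ‖ = r} =
      |inner ℝ w x| / ‖(S.orthogonalProjectionOnto w : EuclideanSpace ℝ (Fin D))‖ :=
  margin_linear_classifier_general D w x S hw
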